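/- There exists a constant C > 0 (one may take C = 2/3) such that for every ε > 0 and every function u : ℝ³ → ℝ continuously differentiable on a neighborhood of the closed cube B_ε = [0,ε]³, with Γ_ε = {0} × [0,ε] × [0,ε] a face of the cube, one has |(1/ε³)·∫_{B_ε} u(x) dx − (1/ε²)·∫_{Γ_ε} u(0, x₂, x₃) dx₂ dx₃| ≤ C·ε^{−1/2}·(∫_{B_ε} |∇u(x)|² dx)^{1/2}. (The average of u over a cube of size ε differs from its average over a face by at most a constant times ε^{−1/2} times the L² norm of the gradient.) -/

import Mathlib

/-!
Along each segment `s ↦ (s, y, z)`, `0 ≤ s ≤ ε`, the fundamental theorem of calculus bounds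
`|u (t, y, z) - u (0, y, z)|` by the integral of `‖∇u‖` over the whole segment. Integrating over
the cube (Fubini) gives `|∫_B u - ε ∫_Γ u| ≤ ε ∫_B ‖∇u‖`, and Cauchy–Schwarz gives
`∫_B ‖∇u‖ ≤ ε^{3/2} ‖∇u‖_{L²(B)}`; dividing by `ε³` yields the estimate with `C = 1`.
-/

open MeasureTheory Set

noncomputable section

/-- `ℝ³` with the Euclidean norm. -/
abbrev E3 := EuclideanSpace ℝ (Fin 3)

/-- The closed cube `B_ε = [0,ε]³` in `ℝ³`. -/
def Bcube (ε : ℝ) : Set E3 :=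
  {x | x 0 ∈ Icc 0 ε ∧ x 1 ∈ Icc 0 ε ∧ x 2 ∈ Icc 0 ε}

/-- The point `(0, y, z)` of `ℝ³`, used to parametrize the face
`Γ_ε = {0} × [0,ε] × [0,ε]` of `B_ε`. -/
def facePt (y z : ℝ) : E3 := (WithLp.equiv 2 (Fin 3 → ℝ)).symm ![0, y, z]

theorem integral_le_sqrt_measureReal_mul_sqrt_integral_sq {α : Type*} [MeasurableSpace α]
    {μ : Measure α} [IsFiniteMeasure μ] {g : α → ℝ} (hg₀ : 0 ≤ᵐ[μ] g) (hg : MemLp g 2 μ) :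
    ∫ x, g x ∂μ ≤ √(μ.real univ) * √(∫ x, g x ^ 2 ∂μ) := by
  have h := integral_mul_le_Lp_mul_Lq_of_nonneg (p := 2) (q := 2) Real.HolderConjugate.two_two
    (f := fun _ => (1 : ℝ)) (Filter.Eventually.of_forall fun _ => zero_le_one) hg₀
    (by simpa using memLp_const (1 : ℝ)) (by simpa using hg)
  simpa [Real.sqrt_eq_rpow] using h

section LineSegment

variable {E F : Type*} [NormedAddCommGroup E] [NormedSpace ℝ E] [NormedAddCommGroup F]
  [NormedSpace ℝ F]

theorem norm_sub_le_integral_norm_fderiv_of_contDiffOn {u : E → F} {U : Set E} (hU : IsOpen U)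
    (hu : ContDiffOn ℝ 1 u U) {x v : E} {b t : ℝ} (ht : t ∈ Icc 0 b)
    (hxv : ∀ s ∈ Icc 0 b, x + s • v ∈ U) :
    ‖u (x + t • v) - u x‖ ≤ ‖v‖ * ∫ s in Icc 0 b, ‖fderiv ℝ u (x + s • v)‖ := by
  set L : ℝ → E := fun s => x + s • v
  have hL : Continuous L := by fun_prop
  have hLU : MapsTo L (Icc 0 b) U := hxv
  have hderiv : ∀ s ∈ Icc 0 b, HasDerivAt (u ∘ L) (fderiv ℝ u (L s) v) s := fun s hs => by
    have hLs : HasDerivAt L v s := by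
      simpa only [one_smul] using ((hasDerivAt_id' s).smul_const v).const_add x
    exact ((hu.differentiableOn one_ne_zero).differentiableAt
      (hU.mem_nhds (hxv s hs))).hasFDerivAt.comp_hasDerivAt s hLs
  have hB : ContinuousOn (fun s => ‖v‖ * ‖fderiv ℝ u (L s)‖) (Icc 0 b) :=
    continuousOn_const.mul
      ((hu.continuousOn_fderiv_of_isOpen hU le_rfl).comp hL.continuousOn hLU).norm
  have hsub : Icc 0 t ⊆ Icc 0 b := Icc_subset_Icc le_rfl ht.2
  calc ‖u (x + t • v) - u x‖ = ‖(u ∘ L) t - (u ∘ L) 0‖ := by simp [L]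
    _ ≤ ∫ s in 0..t, ‖v‖ * ‖fderiv ℝ u (L s)‖ := by
      refine norm_sub_le_integral_of_norm_deriv_le_of_le ht.1 ?_ ?_ ?_ ?_
      · exact fun s hs => (hderiv s (hsub hs)).continuousAt.continuousWithinAt
      · exact fun s hs =>
          (hderiv s (hsub (Ioo_subset_Icc_self hs))).differentiableAt.differentiableWithinAt
      · refine Filter.Eventually.of_forall fun s hs => ?_
        rw [(hderiv s (hsub (Ioo_subset_Icc_self hs))).deriv, mul_comm]
        exact (fderiv ℝ u (L s)).le_opNorm v
      · exact (hB.mono hsub).intervalIntegrable_of_Icc ht.1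
    _ ≤ ∫ s in Icc 0 b, ‖v‖ * ‖fderiv ℝ u (L s)‖ := by
      rw [intervalIntegral.integral_of_le ht.1, ← integral_Icc_eq_integral_Ioc]
      exact setIntegral_mono_set (hB.integrableOn_compact isCompact_Icc)
        (Filter.Eventually.of_forall fun s => by positivity) hsub.eventuallyLE
    _ = ‖v‖ * ∫ s in Icc 0 b, ‖fderiv ℝ u (x + s • v)‖ := integral_const_mul _ _

end LineSegment

section Product

variable {α β : Type*} [MeasurableSpace α] [MeasurableSpace β] {μ : Measure α} {ν : Measure β}
  [IsFiniteMeasure μ] [SFinite ν]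

theorem integral_abs_le_measureReal_mul_integral_of_abs_le_integral_fst
    {F G : α × β → ℝ} (hF : Integrable F (μ.prod ν)) (hG : Integrable G (μ.prod ν))
    (hFG : ∀ᵐ t ∂μ, ∀ᵐ p ∂ν, |F (t, p)| ≤ ∫ s, G (s, p) ∂μ) :
    ∫ q, |F q| ∂μ.prod ν ≤ μ.real univ * ∫ q, G q ∂μ.prod ν := by
  have hH : Integrable (fun p => ∫ s, G (s, p) ∂μ) ν := hG.integral_prod_right
  calc ∫ q, |F q| ∂μ.prod ν = ∫ t, ∫ p, |F (t, p)| ∂ν ∂μ := integral_prod _ hF.abs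
    _ ≤ ∫ _t, ∫ p, ∫ s, G (s, p) ∂μ ∂ν ∂μ :=
      integral_mono_of_nonneg (.of_forall fun t => integral_nonneg fun p => abs_nonneg _)
        (integrable_const _)
        (hFG.mono fun t ht => integral_mono_of_nonneg (.of_forall fun p => abs_nonneg _) hH ht)
    _ = μ.real univ * ∫ q, G q ∂μ.prod ν := by
      rw [integral_const, smul_eq_mul, integral_prod_symm _ hG]

theorem abs_integral_sub_measureReal_mul_integral_slice_le {F G : α × β → ℝ} {t₀ : α}
    (hF : Integrable F (μ.prod ν)) (hF₀ : Integrable (fun p => F (t₀, p)) ν)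
    (hG : Integrable G (μ.prod ν))
    (hFG : ∀ᵐ t ∂μ, ∀ᵐ p ∂ν, |F (t, p) - F (t₀, p)| ≤ ∫ s, G (s, p) ∂μ) :
    |∫ q, F q ∂μ.prod ν - μ.real univ * ∫ p, F (t₀, p) ∂ν| ≤
      μ.real univ * ∫ q, G q ∂μ.prod ν := by
  have hF₀' : Integrable (fun q : α × β => F (t₀, q.2)) (μ.prod ν) := hF₀.comp_snd μ
  rw [← smul_eq_mul, ← integral_fun_snd (fun p => F (t₀, p)), ← integral_sub hF hF₀']
  exact abs_integral_le_integral_abs.trans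
    (integral_abs_le_measureReal_mul_integral_of_abs_le_integral_fst (hF.sub hF₀') hG hFG)

end Product

def toE3 : ℝ × ℝ × ℝ ≃ᵐ E3 :=
  ((MeasurableEquiv.prodCongr (MeasurableEquiv.refl ℝ) MeasurableEquiv.finTwoArrow.symm).trans
    (MeasurableEquiv.piFinSuccAbove (fun _ : Fin 3 => ℝ) 0).symm).trans
    (MeasurableEquiv.toLp 2 (Fin 3 → ℝ))

theorem toE3_apply (t y z : ℝ) :
    toE3 (t, y, z) = (WithLp.equiv 2 (Fin 3 → ℝ)).symm ![t, y, z] := by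
  show WithLp.toLp 2 ((MeasurableEquiv.piFinSuccAbove (fun _ : Fin 3 => ℝ) 0).symm
    (t, MeasurableEquiv.finTwoArrow.symm (y, z))) = _
  congr 1
  funext i
  fin_cases i <;> rfl

theorem measurePreserving_toE3 : MeasurePreserving toE3 := by
  have hvol : (volume : Measure (ℝ × ℝ × ℝ)) = volume.prod (volume.prod volume) := by
    rw [← Measure.volume_eq_prod, ← Measure.volume_eq_prod]
  rw [hvol]
  exact (EuclideanSpace.volume_preserving_symm_measurableEquiv_toLp (Fin 3)).symm.comp
    ((volume_preserving_piFinSuccAbove (fun _ : Fin 3 => ℝ) 0).symm.comp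
      ((MeasurePreserving.id _).prod (volume_preserving_finTwoArrow ℝ).symm))

theorem continuous_toE3 : Continuous toE3 := by
  have : ⇑toE3 = fun q : ℝ × ℝ × ℝ => WithLp.toLp 2 ![q.1, q.2.1, q.2.2] := by
    funext ⟨t, y, z⟩; exact toE3_apply t y z
  rw [this]
  fun_prop

theorem toE3_preimage_Bcube (ε : ℝ) :
    toE3 ⁻¹' Bcube ε = Icc 0 ε ×ˢ (Icc 0 ε ×ˢ Icc 0 ε) := by
  ext ⟨t, y, z⟩
  simp only [Bcube, mem_preimage, toE3_apply, mem_ofPred_eq, mem_prod]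
  rfl

theorem toE3_mem_Bcube {ε t : ℝ} {p : ℝ × ℝ} (ht : t ∈ Icc 0 ε)
    (hp : p ∈ Icc 0 ε ×ˢ Icc 0 ε) : toE3 (t, p) ∈ Bcube ε := by
  rw [← mem_preimage, toE3_preimage_Bcube]
  exact ⟨ht, hp⟩

theorem facePt_eq_toE3 (y z : ℝ) : facePt y z = toE3 (0, y, z) := (toE3_apply 0 y z).symm

theorem toE3_eq_add_smul (t : ℝ) (p : ℝ × ℝ) :
    toE3 (t, p) = toE3 (0, p) + t • EuclideanSpace.single 0 1 := by
  obtain ⟨y, z⟩ := p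
  ext i
  fin_cases i <;> simp [toE3_apply]

theorem isCompact_Bcube (ε : ℝ) : IsCompact (Bcube ε) := by
  rw [← toE3.image_preimage (Bcube ε), toE3_preimage_Bcube]
  exact (isCompact_Icc.prod (isCompact_Icc.prod isCompact_Icc)).image continuous_toE3

theorem volume_real_Bcube {ε : ℝ} (hε : 0 ≤ ε) : volume.real (Bcube ε) = ε ^ 3 := by
  rw [measureReal_def, ← measurePreserving_toE3.measure_preimage_equiv, toE3_preimage_Bcube,
    Measure.volume_eq_prod, Measure.prod_prod, Measure.volume_eq_prod, Measure.prod_prod,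
    Real.volume_Icc, ENNReal.toReal_mul, ENNReal.toReal_mul, ENNReal.toReal_ofReal (by linarith)]
  ring

theorem setIntegral_Bcube_eq (ε : ℝ) (f : E3 → ℝ) :
    ∫ x in Bcube ε, f x =
      ∫ q, f (toE3 q) ∂(volume.restrict (Icc 0 ε)).prod (volume.restrict (Icc 0 ε ×ˢ Icc 0 ε)) := by
  rw [Measure.prod_restrict, ← Measure.volume_eq_prod, ← toE3_preimage_Bcube,
    measurePreserving_toE3.setIntegral_preimage_emb toE3.measurableEmbedding]

theorem integrable_comp_toE3_of_continuousOn {ε : ℝ} {f : E3 → ℝ}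
    (hf : ContinuousOn f (Bcube ε)) :
    Integrable (f ∘ toE3)
      ((volume.restrict (Icc 0 ε)).prod (volume.restrict (Icc 0 ε ×ˢ Icc 0 ε))) := by
  rw [Measure.prod_restrict, ← Measure.volume_eq_prod]
  refine ContinuousOn.integrableOn_compact (isCompact_Icc.prod (isCompact_Icc.prod isCompact_Icc))
    (hf.comp continuous_toE3.continuousOn fun q hq => toE3_mem_Bcube hq.1 hq.2)

theorem abs_sub_comp_toE3_zero_le {ε : ℝ} {u : E3 → ℝ} {U : Set E3} (hU : IsOpen U)
    (hBU : Bcube ε ⊆ U) (hu : ContDiffOn ℝ 1 u U) {t : ℝ} (ht : t ∈ Icc 0 ε) {p : ℝ × ℝ}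
    (hp : p ∈ Icc 0 ε ×ˢ Icc 0 ε) :
    |u (toE3 (t, p)) - u (toE3 (0, p))| ≤ ∫ s in Icc 0 ε, ‖fderiv ℝ u (toE3 (s, p))‖ := by
  have h := norm_sub_le_integral_norm_fderiv_of_contDiffOn hU hu ht fun s hs => by
    rw [← toE3_eq_add_smul]
    exact hBU (toE3_mem_Bcube hs hp)
  simpa only [← toE3_eq_add_smul, PiLp.norm_single, norm_one, one_mul, Real.norm_eq_abs] using h

theorem abs_integral_Bcube_sub_mul_integral_face_le {ε : ℝ} (hε : 0 ≤ ε) {u : E3 → ℝ}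
    {U : Set E3} (hU : IsOpen U) (hBU : Bcube ε ⊆ U) (hu : ContDiffOn ℝ 1 u U) :
    |(∫ x in Bcube ε, u x) - ε * ∫ p in Icc 0 ε ×ˢ Icc 0 ε, u (facePt p.1 p.2)| ≤
      ε * ∫ x in Bcube ε, ‖fderiv ℝ u x‖ := by
  have hlen : (volume.restrict (Icc 0 ε)).real univ = ε := by
    rw [measureReal_restrict_apply_univ, Real.volume_real_Icc_of_le hε, sub_zero]
  have hF₀ : IntegrableOn (fun p => u (toE3 (0, p))) (Icc 0 ε ×ˢ Icc 0 ε) :=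
    (hu.continuousOn.comp (continuous_toE3.comp (Continuous.prodMk_right 0)).continuousOn
      fun p hp => hBU (toE3_mem_Bcube (left_mem_Icc.2 hε) hp)).integrableOn_compact
        (isCompact_Icc.prod isCompact_Icc)
  have key := abs_integral_sub_measureReal_mul_integral_slice_le
    (integrable_comp_toE3_of_continuousOn (hu.continuousOn.mono hBU)) hF₀
    (integrable_comp_toE3_of_continuousOn
      ((hu.continuousOn_fderiv_of_isOpen hU le_rfl).mono hBU).norm) (by
    filter_upwards [ae_restrict_mem measurableSet_Icc] with t ht
    filter_upwards [ae_restrict_mem (measurableSet_Icc.prod measurableSet_Icc)] with p hp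
    exact abs_sub_comp_toE3_zero_le hU hBU hu ht hp)
  rw [hlen] at key
  simpa only [setIntegral_Bcube_eq, facePt_eq_toE3, Prod.mk.eta, Function.comp_def] using key

theorem integral_Bcube_le_mul_sqrt_integral_sq {ε : ℝ} (hε : 0 ≤ ε) {g : E3 → ℝ}
    (hg : ContinuousOn g (Bcube ε)) (hg₀ : ∀ x ∈ Bcube ε, 0 ≤ g x) :
    ∫ x in Bcube ε, g x ≤ ε * √ε * √(∫ x in Bcube ε, g x ^ 2) := by
  have : IsFiniteMeasure (volume.restrict (Bcube ε)) :=
    isFiniteMeasure_restrict.2 (isCompact_Bcube ε).measure_lt_top.ne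
  have hg₂ : MemLp g 2 (volume.restrict (Bcube ε)) :=
    (memLp_two_iff_integrable_sq (hg.integrableOn_compact (isCompact_Bcube ε)).1).2
      ((hg.pow 2).integrableOn_compact (isCompact_Bcube ε))
  have hsqrt : √(ε ^ 3) = ε * √ε := by
    rw [pow_succ, Real.sqrt_mul (by positivity), Real.sqrt_sq hε]
  have h := integral_le_sqrt_measureReal_mul_sqrt_integral_sq
    (ae_restrict_of_forall_mem (isCompact_Bcube ε).measurableSet hg₀) hg₂
  rwa [measureReal_restrict_apply_univ, volume_real_Bcube hε, hsqrt] at h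

/-- **Average over a cube versus average over a face.** There exists `C > 0` (one may
take `C = 2/3`) such that for every `ε > 0` and every `u` continuously differentiable on
a neighborhood of the closed cube `B_ε = [0,ε]³`, the average of `u` over `B_ε` differs
from its average over the face `Γ_ε = {0} × [0,ε] × [0,ε]` by at most
`C·ε^{−1/2}·(∫_{B_ε} |∇u|²)^{1/2}`. -/
theorem cube_average_vs_face_average :
    ∃ C : ℝ, 0 < C ∧ ∀ ε : ℝ, 0 < ε → ∀ u : E3 → ℝ,
      (∃ U : Set E3, IsOpen U ∧ Bcube ε ⊆ U ∧ ContDiffOn ℝ 1 u U) →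
      |(1/ε^3) * (∫ x in Bcube ε, u x) -
        (1/ε^2) * (∫ p in Icc (0:ℝ) ε ×ˢ Icc (0:ℝ) ε, u (facePt p.1 p.2))| ≤
      C / Real.sqrt ε * Real.sqrt (∫ x in Bcube ε, ‖fderiv ℝ u x‖ ^ 2) := by
  refine ⟨1, one_pos, fun ε hε u ⟨U, hU, hBU, hu⟩ => ?_⟩
  have htrace := abs_integral_Bcube_sub_mul_integral_face_le hε.le hU hBU hu
  have hCS := integral_Bcube_le_mul_sqrt_integral_sq hε.le
    ((hu.continuousOn_fderiv_of_isOpen hU le_rfl).mono hBU).norm fun x _ => norm_nonneg _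
  set A := ∫ x in Bcube ε, u x
  set Γ := ∫ p in Icc (0:ℝ) ε ×ˢ Icc (0:ℝ) ε, u (facePt p.1 p.2)
  set D := √(∫ x in Bcube ε, ‖fderiv ℝ u x‖ ^ 2)
  calc |1 / ε ^ 3 * A - 1 / ε ^ 2 * Γ| = 1 / ε ^ 3 * |A - ε * Γ| := by
        rw [show 1 / ε ^ 3 * A - 1 / ε ^ 2 * Γ = 1 / ε ^ 3 * (A - ε * Γ) by field_simp,
          abs_mul, abs_of_pos (by positivity)]
    _ ≤ 1 / ε ^ 3 * (ε * (ε * √ε * D)) := by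
        gcongr
        exact htrace.trans (by gcongr)
    _ = 1 / √ε * D := by
        field_simp
        rw [Real.sq_sqrt hε.le]

end
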